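/- Let n ∈ ℕ, N = 2^n, let G be the n-fold Kronecker power over 𝔽₂ of the kernel [[1,0],[1,1]], and fix a bit position ℓ < n. For all j, c ∈ {0,…,N−1}: (i) if the ℓ-th binary digit of c is 1 and the ℓ-th binary digit of j is 0, then G[j,c] = 0; (ii) if the ℓ-th binary digits of c and j are both 1, then G[j,c] = G[j, c − 2^ℓ]; (iii) if the ℓ-th binary digit of c is 0, then G[j,c] = G[j XOR 2^ℓ, c], i.e., the entries of row j in columns whose ℓ-th digit is 0 do not depend on the ℓ-th digit of j. -/

import Mathlib

open Finset

/-- The polar kernel `G₂ = [[1,0],[1,1]]` over `𝔽₂`. -/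
def polarKernel : Matrix (Fin 2) (Fin 2) (ZMod 2) := !![1, 0; 1, 1]

/-- The `n`-fold Kronecker power of the polar kernel, an `N × N` matrix over `𝔽₂`
with `N = 2 ^ n`, rows and columns indexed by `0, …, N-1`. -/
def polarG : (n : ℕ) → Matrix (Fin (2 ^ n)) (Fin (2 ^ n)) (ZMod 2)
  | 0 => 1
  | n + 1 =>
    Matrix.reindex (finCongr (by ring)) (finCongr (by ring))
      (Matrix.reindex finProdFinEquiv finProdFinEquiv
        (Matrix.kroneckerMap (· * ·) polarKernel (polarG n)))

/-- Row `g_t` of the polar matrix, as a vector in `𝔽₂^N`. -/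
def row (n : ℕ) (t : Fin (2 ^ n)) : Fin (2 ^ n) → ZMod 2 := fun c => polarG n t c

/-- Hamming weight `i₁(v)`: the number of nonzero coordinates of `v`. -/
def hammingWeight {N : ℕ} (v : Fin N → ZMod 2) : ℕ :=
  (Finset.univ.filter fun c => v c ≠ 0).card

/-- `popcount j`: the number of ones in the binary representation of `j`. -/
def popcount (j : ℕ) : ℕ := (Nat.bits j).count true

/-!
Unfolding the Kronecker power bit by bit gives `G[j, c] = ∏ᵢ G₂[b_{j,i}, b_{c,i}]`, so
`G[j, c] = 1` exactly when every binary digit set in `c` is also set in `j`. All three claims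
are then statements about single bits; for the second one, clearing a set bit `ℓ` of `c` by
subtracting `2 ^ ℓ` is the same as flipping it by `XOR 2 ^ ℓ`.
-/

theorem Nat.sub_two_pow_eq_xor_two_pow {c ℓ : ℕ} (h : c.testBit ℓ = true) :
    c - 2 ^ ℓ = c ^^^ 2 ^ ℓ := by
  obtain ⟨m, r, hr, rfl⟩ : ∃ m r, r < 2 ^ ℓ ∧ c = 2 ^ ℓ * m + r :=
    ⟨c / 2 ^ ℓ, c % 2 ^ ℓ, Nat.mod_lt _ (Nat.two_pow_pos ℓ), (Nat.div_add_mod c _).symm⟩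
  have hm : Odd m := by
    rw [Nat.testBit_two_pow_mul_add _ hr, if_neg (lt_irrefl ℓ), Nat.sub_self,
      Nat.testBit_zero] at h
    exact Nat.odd_iff.mpr (of_decide_eq_true h)
  have hsub : 2 ^ ℓ * m + r - 2 ^ ℓ = 2 ^ ℓ * (m ^^^ 1) + r := by
    have := Nat.le_mul_of_pos_right (2 ^ ℓ) hm.pos
    rw [Nat.xor_one_of_odd hm, Nat.mul_sub_one]
    omega
  apply Nat.eq_of_testBit_eq
  intro i
  rw [hsub, Nat.testBit_xor, Nat.testBit_two_pow_mul_add _ hr, Nat.testBit_two_pow_mul_add _ hr,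
    Nat.testBit_two_pow]
  split_ifs with hi
  · simp [show ℓ ≠ i by omega]
  · rw [Nat.testBit_xor, ← Nat.pow_zero 2, Nat.testBit_two_pow]
    exact congrArg _ (decide_eq_decide.mpr (by omega))

theorem polarG_succ_apply (n : ℕ) (j c : Fin (2 ^ (n + 1))) :
    polarG (n + 1) j c =
      polarKernel ⟨j / 2 ^ n, Nat.div_lt_of_lt_mul (pow_succ 2 n ▸ j.isLt)⟩
          ⟨c / 2 ^ n, Nat.div_lt_of_lt_mul (pow_succ 2 n ▸ c.isLt)⟩ *
        polarG n ⟨j % 2 ^ n, Nat.mod_lt _ (Nat.two_pow_pos n)⟩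
          ⟨c % 2 ^ n, Nat.mod_lt _ (Nat.two_pow_pos n)⟩ := by
  simp [polarG, Matrix.reindex_apply, Matrix.submatrix_apply, finProdFinEquiv,
    Matrix.kroneckerMap_apply, Fin.divNat, Fin.modNat]

theorem polarKernel_apply (a b : Fin 2) :
    polarKernel a b = if (b : ℕ).testBit 0 → (a : ℕ).testBit 0 then 1 else 0 := by
  fin_cases a <;> fin_cases b <;> rfl

theorem polarG_apply (n : ℕ) (j c : Fin (2 ^ n)) :
    polarG n j c = if ∀ i < n, (c : ℕ).testBit i → (j : ℕ).testBit i then 1 else 0 := by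
  induction n with
  | zero =>
    obtain rfl : j = c := Subsingleton.elim (α := Fin 1) j c
    simp [polarG]
  | succ n ih =>
    rw [polarG_succ_apply, ih, polarKernel_apply, ite_zero_mul_ite_zero, mul_one]
    refine if_congr ?_ rfl rfl
    simp only [Nat.testBit_div_two_pow, Nat.zero_add, Nat.testBit_mod_two_pow]
    rw [Nat.forall_lt_succ_right, and_comm]
    refine and_congr_left' (forall₂_congr fun i hi => ?_)
    simp [hi]

theorem polarG_apply_congr {n : ℕ} {j c j' c' : Fin (2 ^ n)}
    (h : ∀ i < n, ((c : ℕ).testBit i → (j : ℕ).testBit i) ↔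
      ((c' : ℕ).testBit i → (j' : ℕ).testBit i)) :
    polarG n j c = polarG n j' c' := by
  rw [polarG_apply, polarG_apply]
  exact if_congr (forall₂_congr h) rfl rfl

/-- single-position projection property of the polar matrix entries. -/
theorem polar_entry_projection (n ℓ : ℕ) (hℓ : ℓ < n) (j c : Fin (2 ^ n)) :
    ((c : ℕ).testBit ℓ = true → (j : ℕ).testBit ℓ = false → polarG n j c = 0) ∧
    ((c : ℕ).testBit ℓ = true → (j : ℕ).testBit ℓ = true →
      polarG n j c = polarG n j ⟨(c : ℕ) - 2 ^ ℓ, lt_of_le_of_lt (Nat.sub_le _ _) c.isLt⟩) ∧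
    ((c : ℕ).testBit ℓ = false →
      polarG n j c = polarG n
        ⟨(j : ℕ) ^^^ 2 ^ ℓ,
          Nat.xor_lt_two_pow j.isLt (Nat.pow_lt_pow_right one_lt_two hℓ)⟩ c) := by
  refine ⟨fun hc hj => ?_, fun hc hj => ?_, fun hc => ?_⟩
  · rw [polarG_apply, if_neg]
    exact fun h => by simpa [hj] using h ℓ hℓ hc
  · refine polarG_apply_congr fun i _ => ?_
    dsimp only
    rw [Nat.sub_two_pow_eq_xor_two_pow hc, Nat.testBit_xor, Nat.testBit_two_pow]
    rcases eq_or_ne ℓ i with rfl | hi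
    · simp [hc, hj]
    · simp [hi]
  · refine polarG_apply_congr fun i _ => ?_
    dsimp only
    rw [Nat.testBit_xor, Nat.testBit_two_pow]
    rcases eq_or_ne ℓ i with rfl | hi
    · simp [hc]
    · simp [hi]
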